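/- Let S be a set of n ≥ 3 points in convex position in the plane and let u, v be distinct points of S. Then the spanning star star(u) can be transformed into the spanning star star(v) by a sequence of at most n − 2 slides. -/

import Mathlib

open Set

/-- Points of the plane. -/
abbrev Pt : Type := ℝ × ℝ

/-- Two straight segments cross if their relative interiors (open segments) share a point. -/
def SegCross (a b c d : Pt) : Prop :=
  (openSegment ℝ a b ∩ openSegment ℝ c d).Nonempty

/-- A finite point set is in general position if no three of its points are collinear. -/
def GeneralPosition (S : Finset Pt) : Prop :=
  ∀ a ∈ S, ∀ b ∈ S, ∀ c ∈ S, a ≠ b → a ≠ c → b ≠ c → ¬ Collinear ℝ ({a, b, c} : Set Pt)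

/-- A finite point set is in convex position: it is in general position and every point is an
extreme point of the convex hull (it is not in the convex hull of the other points). -/
def ConvexPosition (S : Finset Pt) : Prop :=
  GeneralPosition S ∧ ∀ x ∈ S, x ∉ convexHull ℝ ((S : Set Pt) \ {x})

/-- Orientation determinant of the triple `a b c`. -/
noncomputable def det2 (a b c : Pt) : ℝ :=
  (b.1 - a.1) * (c.2 - a.2) - (b.2 - a.2) * (c.1 - a.1)

/-- For a point set `T` in general position, the segment `ab` is an edge of the boundary of the
convex hull of `T` iff all other points of `T` lie strictly on one side of the line `ab`. -/
def HullEdge (T : Set Pt) (a b : Pt) : Prop :=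
  a ∈ T ∧ b ∈ T ∧ a ≠ b ∧
    ((∀ x ∈ T, x ≠ a → x ≠ b → 0 < det2 a b x) ∨ (∀ x ∈ T, x ≠ a → x ≠ b → det2 a b x < 0))

/-- `a` is a vertex (extreme point) of the convex hull of `T`. -/
def HullVertex (T : Set Pt) (a : Pt) : Prop :=
  a ∈ T ∧ a ∉ convexHull ℝ (T \ {a})

/-- A plane spanning tree on a finite point set `S`: a tree with vertex set `S` whose
edges, drawn as straight segments, pairwise do not cross. -/
structure PlaneTree (S : Finset Pt) where
  graph : SimpleGraph {x : Pt // x ∈ S}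
  isTree : graph.IsTree
  noncross : ∀ a b c d : {x : Pt // x ∈ S}, graph.Adj a b → graph.Adj c d →
    s(a, b) ≠ s(c, d) → ¬ SegCross a.1 b.1 c.1 d.1

/-- A vertex of a graph is a leaf if it has exactly one neighbour. -/
def IsLeafV {V : Type*} (G : SimpleGraph V) (v : V) : Prop :=
  (G.neighborSet v).ncard = 1

/-- A graph is a path graph (possibly empty or a single vertex) if its vertices can be
enumerated so that adjacency is exactly consecutiveness. -/
def IsPathGraph {V : Type*} (G : SimpleGraph V) : Prop :=
  ∃ (n : ℕ) (f : Fin n ≃ V), ∀ i j : Fin n, G.Adj (f i) (f j) ↔ (i.1 + 1 = j.1 ∨ j.1 + 1 = i.1)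

/-- A caterpillar: a tree in which the non-leaf vertices induce a path
(possibly empty or a single vertex), called the spine. -/
def IsCaterpillar {V : Type*} (G : SimpleGraph V) : Prop :=
  G.IsTree ∧ IsPathGraph (G.induce {v : V | ¬ IsLeafV G v})

/-- A plane spanning caterpillar on `S`. -/
structure PlaneCaterpillar (S : Finset Pt) extends PlaneTree S where
  isCaterpillar : IsCaterpillar graph

/-- A plane spanning path on `S`. -/
structure PlanePath (S : Finset Pt) extends PlaneTree S where
  isPath : IsPathGraph graph

/-- The (closed) triangle spanned by `a`, `b`, `c` contains no point of `S` besides `a,b,c`. -/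
def EmptyTriangle (S : Finset Pt) (a b c : Pt) : Prop :=
  ∀ x ∈ S, x ∈ convexHull ℝ ({a, b, c} : Set Pt) → x = a ∨ x = b ∨ x = c

/-- One caterpillar is obtained from another by a slide: `E₂ = (E₁ \ {ab}) ∪ {ac}` where the
triangle `abc` contains no other point of `S` and `bc ∈ E₁ ∩ E₂`. -/
def SlideAux {S : Finset Pt} (C₁ C₂ : PlaneCaterpillar S) : Prop :=
  ∃ a b c : {x : Pt // x ∈ S},
    C₁.graph.Adj a b ∧ C₁.graph.Adj b c ∧ C₂.graph.Adj b c ∧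
    EmptyTriangle S a.1 b.1 c.1 ∧
    C₂.graph.edgeSet = (C₁.graph.edgeSet \ {s(a, b)}) ∪ {s(a, c)}

/-- The (symmetric) slide relation: the edge relation of the slide graph `G_C^slide(S)`. -/
def Slide {S : Finset Pt} (C₁ C₂ : PlaneCaterpillar S) : Prop :=
  SlideAux C₁ C₂ ∨ SlideAux C₂ C₁

/-- A sequence of `m` slides transforming `C₁` into `C₂`. -/
def SlideSeq {S : Finset Pt} (m : ℕ) (C₁ C₂ : PlaneCaterpillar S) : Prop :=
  ∃ g : ℕ → PlaneCaterpillar S, g 0 = C₁ ∧ g m = C₂ ∧ ∀ i < m, Slide (g i) (g (i + 1))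

/-- Rotation: `E₂ = (E₁ \ {ab}) ∪ {ac}` for distinct edges `ab`, `ac` sharing the endpoint `a`. -/
def RotationAux {S : Finset Pt} (C₁ C₂ : PlaneCaterpillar S) : Prop :=
  ∃ a b c : {x : Pt // x ∈ S}, b ≠ c ∧ C₁.graph.Adj a b ∧
    C₂.graph.edgeSet = (C₁.graph.edgeSet \ {s(a, b)}) ∪ {s(a, c)}

/-- The (symmetric) rotation relation: the edge relation of the rotation graph `G_C^rot(S)`. -/
def Rotation {S : Finset Pt} (C₁ C₂ : PlaneCaterpillar S) : Prop :=
  RotationAux C₁ C₂ ∨ RotationAux C₂ C₁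

/-- Flip of caterpillars: `E₂ = (E₁ \ {e}) ∪ {f}` for edges `e = ab`, `f = cd`. -/
def CatFlipAux {S : Finset Pt} (C₁ C₂ : PlaneCaterpillar S) : Prop :=
  ∃ a b c d : {x : Pt // x ∈ S}, C₁.graph.Adj a b ∧ C₂.graph.Adj c d ∧
    C₂.graph.edgeSet = (C₁.graph.edgeSet \ {s(a, b)}) ∪ {s(c, d)}

/-- The (symmetric) flip relation on caterpillars: edge relation of `G_C^flip(S)`. -/
def CatFlip {S : Finset Pt} (C₁ C₂ : PlaneCaterpillar S) : Prop :=
  CatFlipAux C₁ C₂ ∨ CatFlipAux C₂ C₁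

/-- Compatible flip of caterpillars: a flip whose two exchanged edges do not cross. -/
def CatCompFlipAux {S : Finset Pt} (C₁ C₂ : PlaneCaterpillar S) : Prop :=
  ∃ a b c d : {x : Pt // x ∈ S}, C₁.graph.Adj a b ∧ C₂.graph.Adj c d ∧
    ¬ SegCross a.1 b.1 c.1 d.1 ∧
    C₂.graph.edgeSet = (C₁.graph.edgeSet \ {s(a, b)}) ∪ {s(c, d)}

/-- The (symmetric) compatible flip relation: edge relation of `G_C^comp-flip(S)`. -/
def CatCompFlip {S : Finset Pt} (C₁ C₂ : PlaneCaterpillar S) : Prop :=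
  CatCompFlipAux C₁ C₂ ∨ CatCompFlipAux C₂ C₁

/-- The spanning star on `S` with center `x`. -/
def starGraph (S : Finset Pt) (x : {p : Pt // p ∈ S}) : SimpleGraph {p : Pt // p ∈ S} where
  Adj a b := a ≠ b ∧ (a = x ∨ b = x)
  symm := ⟨fun a b h => ⟨h.1.symm, h.2.symm⟩⟩
  loopless := ⟨fun a h => h.1 rfl⟩

/-- `s` is an endpoint of the spine of the caterpillar `C`: it is a non-leaf vertex having at
most one non-leaf neighbour. -/
def SpineEndpoint {S : Finset Pt} (C : PlaneCaterpillar S) (s : {p : Pt // p ∈ S}) : Prop :=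
  ¬ IsLeafV C.graph s ∧
    ∀ w w' : {p : Pt // p ∈ S}, C.graph.Adj s w → C.graph.Adj s w' →
      ¬ IsLeafV C.graph w → ¬ IsLeafV C.graph w' → w = w'

/-- `C` is a double star with centers `u` and `v`: it contains the edge `uv` and every other
vertex is a leaf adjacent to `u` or to `v`. -/
def IsDoubleStar {S : Finset Pt} (C : PlaneCaterpillar S) (u v : {p : Pt // p ∈ S}) : Prop :=
  C.graph.Adj u v ∧ ∀ w : {p : Pt // p ∈ S}, w ≠ u → w ≠ v →
    IsLeafV C.graph w ∧ (C.graph.Adj u w ∨ C.graph.Adj v w)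

/-- The points of `S` remaining after removing `v 0, …, v (i-1)`. -/
def PeelRest (S : Finset Pt) (v : ℕ → Pt) (i : ℕ) : Set Pt :=
  {x : Pt | x ∈ S ∧ ∀ j < i, v j ≠ x}

/-- `v 0, …, v (n-1)` is a generalized peeling path on `S`: an orientation of a plane spanning
path such that `v 0` is a hull vertex of `S` and each subsequent `v i` is a hull vertex of the
set of remaining points, with the segment from `v (i-1)` not crossing any edge of the hull of
the remaining points. -/
def IsGenPeelingSeq (S : Finset Pt) (n : ℕ) (v : ℕ → Pt) : Prop :=
  (∀ i < n, v i ∈ S) ∧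
  (∀ i < n, ∀ j < n, v i = v j → i = j) ∧
  (∀ x ∈ S, ∃ i < n, v i = x) ∧
  (∀ i j : ℕ, i + 1 < n → j + 1 < n → i ≠ j →
    ¬ SegCross (v i) (v (i + 1)) (v j) (v (j + 1))) ∧
  HullVertex (S : Set Pt) (v 0) ∧
  (∀ i : ℕ, 0 < i → i < n →
    HullVertex (PeelRest S v i) (v i) ∧
    ∀ a b : Pt, HullEdge (PeelRest S v i) a b → ¬ SegCross (v (i - 1)) (v i) a b)

/-- A plane spanning path admits an orientation making it a generalized peeling path. -/
def IsPeelingPath {S : Finset Pt} (P : PlanePath S) : Prop :=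
  ∃ v : ℕ → Pt, IsGenPeelingSeq S S.card v ∧
    ∀ a b : {x : Pt // x ∈ S}, P.graph.Adj a b ↔
      ∃ i : ℕ, i + 1 < S.card ∧
        ((v i = a.1 ∧ v (i + 1) = b.1) ∨ (v i = b.1 ∧ v (i + 1) = a.1))

/-- Flip of plane spanning paths: `E₂ = (E₁ \ {e}) ∪ {f}` for edges `e = ab`, `f = cd`. -/
def PathFlipAux {S : Finset Pt} (P Q : PlanePath S) : Prop :=
  ∃ a b c d : {x : Pt // x ∈ S}, P.graph.Adj a b ∧ Q.graph.Adj c d ∧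
    Q.graph.edgeSet = (P.graph.edgeSet \ {s(a, b)}) ∪ {s(c, d)}

/-- The flip graph `G_P(S)` of plane spanning paths on `S`. -/
def flipGraph (S : Finset Pt) : SimpleGraph (PlanePath S) where
  Adj P Q := P ≠ Q ∧ (PathFlipAux P Q ∨ PathFlipAux Q P)
  symm := ⟨fun P Q h => ⟨h.1.symm, h.2.symm⟩⟩
  loopless := ⟨fun P h => h.1 rfl⟩

/-- The point `u` is an endpoint of the plane spanning path `P`. -/
def IsPathEndpoint {S : Finset Pt} (P : PlanePath S) (u : Pt) : Prop :=
  ∃ hu : u ∈ S, IsLeafV P.graph ⟨u, hu⟩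

/-- The subgraph `G_P^u(S)` of the flip graph induced by the paths with endpoint `u`. -/
def flipGraphU (S : Finset Pt) (u : Pt) :
    SimpleGraph {P : PlanePath S // IsPathEndpoint P u} where
  Adj P Q := (flipGraph S).Adj P.1 Q.1
  symm := ⟨fun P Q h => (flipGraph S).adj_symm h⟩
  loopless := ⟨fun P h => (flipGraph S).loopless.irrefl P.1 h⟩

/-- A caterpillar is well-separated: there is an enumeration `f 0, …, f (k-1)` of its spine
(the non-leaf vertices, in path order) such that for every `i` the convex hull of the set
`S_{1,i}` of the first `i+1` spine vertices together with their leaves contains no other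
point of `S`. -/
def WellSeparated {S : Finset Pt} (C : PlaneCaterpillar S) : Prop :=
  ∃ (k : ℕ) (f : Fin k → {x : Pt // x ∈ S}),
    Function.Injective f ∧
    (∀ w : {x : Pt // x ∈ S}, ¬ IsLeafV C.graph w ↔ ∃ i : Fin k, f i = w) ∧
    (∀ i j : Fin k, C.graph.Adj (f i) (f j) ↔ (i.1 + 1 = j.1 ∨ j.1 + 1 = i.1)) ∧
    (∀ i : Fin k, ∀ x : {x : Pt // x ∈ S},
      (x : Pt) ∈ convexHull ℝ {p : Pt | ∃ (j : Fin k) (w : {x : Pt // x ∈ S}),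
        j ≤ i ∧ p = (w : Pt) ∧ (w = f j ∨ (C.graph.Adj (f j) w ∧ IsLeafV C.graph w))} →
      ∃ (j : Fin k) (w : {x : Pt // x ∈ S}),
        j ≤ i ∧ (x : Pt) = (w : Pt) ∧ (w = f j ∨ (C.graph.Adj (f j) w ∧ IsLeafV C.graph w)))

/-!
In convex position every triangle on three points of `S` is empty. Hence, in a double star with
centres `u` and `v`, moving a leaf `t` from `u` to `v` (replacing `tu` by `tv` while `uv` stays)
is a slide. Starting from `star(u)` we move the `n - 2` points other than `u`, `v` one at a time.
The new edge `vt` must not cross an edge `up` still at `u`; this holds if `t` is chosen, among the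
remaining points on one side of line `uv`, to maximise the angle `∠uvt`.
-/

section Geometry

noncomputable def dot2 (v a b : Pt) : ℝ :=
  (a.1 - v.1) * (b.1 - v.1) + (a.2 - v.2) * (b.2 - v.2)

lemma det2_self_fst (a b : Pt) : det2 a b a = 0 := by unfold det2; ring

lemma det2_self_snd (a b : Pt) : det2 a b b = 0 := by unfold det2; ring

lemma det2_swap_fst_snd (a b c : Pt) : det2 b a c = -det2 a b c := by unfold det2; ring

lemma det2_swap_snd_thd (a b c : Pt) : det2 a c b = -det2 a b c := by unfold det2; ring

lemma dot2_mul_det2_sub_dot2_mul_det2 (v a x y : Pt) :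
    dot2 v a x * det2 v a y - dot2 v a y * det2 v a x = dot2 v a a * det2 v x y := by
  simp only [dot2, det2]; ring

lemma dot2_self_pos {v a : Pt} (h : a ≠ v) : 0 < dot2 v a a := by
  unfold dot2
  by_contra! h'
  exact h (Prod.ext (by nlinarith) (by nlinarith))

lemma det2_of_mem_openSegment {x y z : Pt} (hz : z ∈ openSegment ℝ x y) (a b : Pt) :
    ∃ t : ℝ, 0 < t ∧ t < 1 ∧ det2 a b z = (1 - t) * det2 a b x + t * det2 a b y := by
  rw [openSegment_eq_image] at hz
  obtain ⟨t, ⟨ht0, ht1⟩, rfl⟩ := hz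
  refine ⟨t, ht0, ht1, ?_⟩
  simp only [det2, Prod.fst_add, Prod.snd_add, Prod.smul_fst, Prod.smul_snd, smul_eq_mul]
  ring

lemma collinear_of_det2_eq_zero {a b c : Pt} (h : det2 a b c = 0) :
    Collinear ℝ ({a, b, c} : Set Pt) := by
  rcases eq_or_ne b a with rfl | hab
  · simpa using collinear_pair ℝ b c
  have hd := dot2_self_pos hab
  have h₁ : dot2 a b b * (c.1 - a.1) = dot2 a b c * (b.1 - a.1) := by
    simp only [dot2, det2] at h ⊢; linear_combination (-(b.2 - a.2)) * h
  have h₂ : dot2 a b b * (c.2 - a.2) = dot2 a b c * (b.2 - a.2) := by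
    simp only [dot2, det2] at h ⊢; linear_combination (b.1 - a.1) * h
  have hc : c = AffineMap.lineMap a b (dot2 a b c / dot2 a b b) := by
    ext <;> simp only [AffineMap.lineMap_apply_module, Prod.fst_add, Prod.snd_add, Prod.smul_fst,
      Prod.smul_snd, smul_eq_mul] <;> field_simp
    · linear_combination h₁
    · linear_combination h₂
  rw [Set.pair_comm, Set.insert_comm]
  exact collinear_insert_of_mem_affineSpan_pair (hc ▸ AffineMap.lineMap_mem_affineSpan_pair _ _ _)

lemma segCross_comm {a b c d : Pt} : SegCross c d a b ↔ SegCross a b c d := by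
  rw [SegCross, SegCross, Set.inter_comm]

lemma segCross_swap_left {a b c d : Pt} : SegCross b a c d ↔ SegCross a b c d := by
  rw [SegCross, SegCross, openSegment_symm]

lemma segCross_swap_right {a b c d : Pt} : SegCross a b d c ↔ SegCross a b c d := by
  rw [SegCross, SegCross, openSegment_symm ℝ d]

lemma not_segCross_of_sameSide {p q a b : Pt} (h : 0 < det2 p q a * det2 p q b) :
    ¬ SegCross p q a b := by
  rintro ⟨z, hpq, hab⟩
  obtain ⟨t, -, -, ht⟩ := det2_of_mem_openSegment hpq p q
  obtain ⟨s, hs0, hs1, hs⟩ := det2_of_mem_openSegment hab p q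
  rw [det2_self_fst, det2_self_snd] at ht
  rcases mul_pos_iff.1 h with ⟨ha, hb⟩ | ⟨ha, hb⟩ <;> nlinarith

lemma not_segCross_of_oppSide {u v a b : Pt} (h : det2 u v a * det2 u v b < 0) :
    ¬ SegCross u a v b := by
  rintro ⟨z, hua, hvb⟩
  obtain ⟨t, ht0, -, ht⟩ := det2_of_mem_openSegment hua u v
  obtain ⟨s, hs0, -, hs⟩ := det2_of_mem_openSegment hvb u v
  rw [det2_self_fst] at ht
  rw [det2_self_snd] at hs
  rcases mul_neg_iff.1 h with ⟨ha, hb⟩ | ⟨ha, hb⟩ <;> nlinarith [mul_pos ht0 hs0]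

lemma not_segCross_of_det2_ne_zero {p q r : Pt} (h : det2 p q r ≠ 0) : ¬ SegCross p q p r := by
  rintro ⟨z, hpq, hpr⟩
  obtain ⟨t, ht0, -, ht⟩ := det2_of_mem_openSegment hpq p r
  obtain ⟨s, -, -, hs⟩ := det2_of_mem_openSegment hpr p r
  rw [det2_self_fst] at ht
  rw [det2_self_fst, det2_self_snd] at hs
  have htq : t * det2 p r q = 0 := by linarith
  rw [det2_swap_snd_thd] at htq
  exact h (by simpa [ht0.ne'] using htq)

end Geometry

section Caterpillar

variable {V : Type*} {G : SimpleGraph V} {u v : V}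

lemma IsLeafV.eq_of_adj {w x y : V} (hw : IsLeafV G w) (hx : G.Adj w x) (hy : G.Adj w y) :
    x = y := by
  obtain ⟨z, hz⟩ := Set.ncard_eq_one.1 hw
  have hx' : x ∈ G.neighborSet w := hx
  have hy' : y ∈ G.neighborSet w := hy
  rw [hz] at hx' hy'
  exact hx'.trans hy'.symm

lemma isAcyclic_of_isLeafV (hleaf : ∀ w, w ≠ u → w ≠ v → IsLeafV G w) : G.IsAcyclic := by
  intro x c hc
  have hnbrs : ∀ w ∈ c.support, ∃ y z, y ≠ z ∧ c.toSubgraph.Adj w y ∧ c.toSubgraph.Adj w z := by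
    intro w hw
    obtain ⟨y, z, hyz, hnbr⟩ := Set.ncard_eq_two.1 (hc.ncard_neighborSet_toSubgraph_eq_two hw)
    exact ⟨y, z, hyz, show y ∈ c.toSubgraph.neighborSet w by simp [hnbr],
      show z ∈ c.toSubgraph.neighborSet w by simp [hnbr]⟩
  have hcentre : ∀ w ∈ c.support, w = u ∨ w = v := by
    intro w hw
    by_contra! hwuv
    obtain ⟨y, z, hyz, hy, hz⟩ := hnbrs w hw
    exact hyz ((hleaf w hwuv.1 hwuv.2).eq_of_adj hy.adj_sub hz.adj_sub)
  -- `x` and its two neighbours on the cycle would be three distinct centres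
  obtain ⟨y, z, hyz, hy, hz⟩ := hnbrs x c.start_mem_support
  have hx := hcentre x c.start_mem_support
  have hy' := hcentre y (c.mem_verts_toSubgraph.1 (c.toSubgraph.edge_vert hy.symm))
  have hz' := hcentre z (c.mem_verts_toSubgraph.1 (c.toSubgraph.edge_vert hz.symm))
  have hxy := hy.ne
  have hxz := hz.ne
  grind

lemma isPathGraph_of_card_le_two [Finite V] (hcard : Nat.card V ≤ 2)
    (hadj : ∀ a b, a ≠ b → G.Adj a b) : IsPathGraph G := by
  set f := (Finite.equivFin V).symm
  refine ⟨Nat.card V, f, fun i j => ?_⟩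
  have hadj_iff : G.Adj (f i) (f j) ↔ i ≠ j :=
    ⟨fun h hij => h.ne (congrArg f hij), fun hij => hadj _ _ (f.injective.ne hij)⟩
  rw [hadj_iff, ne_eq, Fin.ext_iff]
  omega

lemma isCaterpillar_of_isLeafV (hconn : G.Connected) (huv : G.Adj u v)
    (hleaf : ∀ w, w ≠ u → w ≠ v → IsLeafV G w) : IsCaterpillar G := by
  have hsub : {w | ¬ IsLeafV G w} ⊆ {u, v} := fun w hw => by
    by_contra h
    simp only [Set.mem_insert_iff, Set.mem_singleton_iff, not_or] at h
    exact hw (hleaf w h.1 h.2)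
  have : Finite {w | ¬ IsLeafV G w} := (Set.toFinite {u, v}).subset hsub
  refine ⟨⟨hconn, isAcyclic_of_isLeafV hleaf⟩, isPathGraph_of_card_le_two ?_ ?_⟩
  · rw [Nat.card_coe_set_eq]
    exact (Set.ncard_le_ncard hsub).trans (Set.ncard_pair huv.ne).le
  · rintro ⟨a, ha⟩ ⟨b, hb⟩ hab
    have ha' := hsub ha
    have hb' := hsub hb
    simp only [SimpleGraph.comap_adj, Function.Embedding.coe_subtype, ne_eq,
      Subtype.mk.injEq] at hab ⊢
    simp only [Set.mem_insert_iff, Set.mem_singleton_iff] at ha' hb'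
    rcases ha' with rfl | rfl <;> rcases hb' with rfl | rfl
    all_goals first | exact absurd rfl hab | exact huv | exact huv.symm

end Caterpillar

section DoubleStar

variable {V : Type*} {u v : V} {R : Finset V}

/-- The vertices of `R` hang at `u`, all others at `v`. -/
def doubleStar (u v : V) (R : Finset V) : SimpleGraph V :=
  SimpleGraph.fromRel fun c w => (c = u ∧ w ∈ R) ∨ (c = v ∧ w ∉ R)

lemma doubleStar_adj_centres (huv : u ≠ v) (hu : u ∉ R) : (doubleStar u v R).Adj u v :=
  ⟨huv, Or.inr (Or.inr ⟨rfl, hu⟩)⟩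

lemma isLeafV_doubleStar {w : V} (hwu : w ≠ u) (hwv : w ≠ v) : IsLeafV (doubleStar u v R) w := by
  classical
  refine Set.ncard_eq_one.2 ⟨if w ∈ R then u else v, Set.ext fun x => ?_⟩
  simp only [SimpleGraph.mem_neighborSet, doubleStar, SimpleGraph.fromRel_adj]
  split_ifs <;> grind

lemma connected_doubleStar (huv : u ≠ v) (hu : u ∉ R) : (doubleStar u v R).Connected := by
  have hreach : ∀ w, (doubleStar u v R).Reachable u w := by
    intro w
    have huv' := (doubleStar_adj_centres huv hu).reachable
    by_cases hwu : w = u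
    · exact hwu ▸ .rfl
    by_cases hwv : w = v
    · exact hwv ▸ huv'
    by_cases hw : w ∈ R
    · exact SimpleGraph.Adj.reachable ⟨Ne.symm hwu, Or.inl (Or.inl ⟨rfl, hw⟩)⟩
    · exact huv'.trans (SimpleGraph.Adj.reachable ⟨Ne.symm hwv, Or.inl (Or.inr ⟨rfl, hw⟩)⟩)
  have : Nonempty V := ⟨u⟩
  exact ⟨fun a b => (hreach a).symm.trans (hreach b)⟩

lemma isCaterpillar_doubleStar (huv : u ≠ v) (hu : u ∉ R) : IsCaterpillar (doubleStar u v R) :=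
  isCaterpillar_of_isLeafV (connected_doubleStar huv hu) (doubleStar_adj_centres huv hu)
    fun _ => isLeafV_doubleStar

lemma edgeSet_doubleStar_erase [DecidableEq V] {t : V} (hu : u ∉ R) (hv : v ∉ R) (ht : t ∈ R) :
    (doubleStar u v (R.erase t)).edgeSet =
      ((doubleStar u v R).edgeSet \ {s(t, u)}) ∪ {s(t, v)} := by
  have htu : t ≠ u := ne_of_mem_of_not_mem ht hu
  have htv : t ≠ v := ne_of_mem_of_not_mem ht hv
  ext e
  induction e using Sym2.ind with
  | _ a b =>
    simp only [SimpleGraph.mem_edgeSet, doubleStar, SimpleGraph.fromRel_adj, Set.mem_union,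
      Set.mem_sdiff, Set.mem_singleton_iff, Sym2.eq_iff, Finset.mem_erase]
    grind

end DoubleStar

lemma SlideSeq.refl {S : Finset Pt} (C : PlaneCaterpillar S) : SlideSeq 0 C C :=
  ⟨fun _ => C, rfl, rfl, fun _ h => absurd h (Nat.not_lt_zero _)⟩

lemma SlideSeq.cons {S : Finset Pt} {m : ℕ} {C₁ C₂ C₃ : PlaneCaterpillar S} (h : Slide C₁ C₂)
    (hs : SlideSeq m C₂ C₃) : SlideSeq (m + 1) C₁ C₃ := by
  obtain ⟨g, hg0, hgm, hstep⟩ := hs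
  refine ⟨fun i => Nat.casesOn i C₁ g, rfl, hgm, fun i hi => ?_⟩
  cases i with
  | zero => simpa [hg0] using h
  | succ i => exact hstep i (by omega)

section PlaneDoubleStar

variable {S : Finset Pt} {u v : {p : Pt // p ∈ S}} {R : Finset {p : Pt // p ∈ S}}

lemma GeneralPosition.det2_ne_zero (hS : GeneralPosition S) {a b c : {p : Pt // p ∈ S}}
    (hab : a ≠ b) (hac : a ≠ c) (hbc : b ≠ c) : det2 a.1 b.1 c.1 ≠ 0 := fun h =>
  hS a.1 a.2 b.1 b.2 c.1 c.2 (Subtype.coe_ne_coe.2 hab) (Subtype.coe_ne_coe.2 hac)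
    (Subtype.coe_ne_coe.2 hbc) (collinear_of_det2_eq_zero h)

lemma ConvexPosition.emptyTriangle (hS : ConvexPosition S) {a b c : Pt} (ha : a ∈ S) (hb : b ∈ S)
    (hc : c ∈ S) : EmptyTriangle S a b c := by
  intro x hx hxabc
  by_contra! hne
  refine hS.2 x hx (convexHull_mono ?_ hxabc)
  simp only [Set.insert_subset_iff, Set.singleton_subset_iff, Set.mem_sdiff, Finset.mem_coe,
    Set.mem_singleton_iff]
  exact ⟨⟨ha, hne.1.symm⟩, ⟨hb, hne.2.1.symm⟩, hc, hne.2.2.symm⟩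

lemma doubleStar_sdiff_pair :
    doubleStar u v (Finset.univ \ {u, v}) = starGraph S u := by
  ext a b
  simp only [doubleStar, SimpleGraph.fromRel_adj, starGraph, Finset.mem_sdiff, Finset.mem_univ,
    Finset.mem_insert, Finset.mem_singleton]
  grind

lemma doubleStar_empty : doubleStar u v ∅ = starGraph S v := by
  ext a b
  simp only [doubleStar, SimpleGraph.fromRel_adj, starGraph, Finset.notMem_empty]
  grind

/-- Edges `up` and `vb` of `doubleStar u v R` are the only ones that could cross. -/
def IsNoncrossingSplit (u v : {p : Pt // p ∈ S}) (R : Finset {p : Pt // p ∈ S}) : Prop :=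
  u ∉ R ∧ v ∉ R ∧ ∀ p ∈ R, ∀ b ∉ R, b ≠ u → b ≠ v → ¬ SegCross u.1 p.1 v.1 b.1

lemma isNoncrossingSplit_empty : IsNoncrossingSplit u v ∅ := by
  simp [IsNoncrossingSplit]

lemma isNoncrossingSplit_sdiff_pair : IsNoncrossingSplit u v (Finset.univ \ {u, v}) :=
  ⟨by simp, by simp, fun _ _ b hb hbu hbv => absurd (by simp [hbu, hbv]) hb⟩

lemma IsNoncrossingSplit.erase {t : {p : Pt // p ∈ S}} (hR : IsNoncrossingSplit u v R)
    (hpivot : ∀ p ∈ R, p ≠ t → ¬ SegCross u.1 p.1 v.1 t.1) :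
    IsNoncrossingSplit u v (R.erase t) := by
  refine ⟨fun hu => hR.1 (Finset.mem_of_mem_erase hu),
    fun hv => hR.2.1 (Finset.mem_of_mem_erase hv), fun p hp b hb hbu hbv => ?_⟩
  rw [Finset.mem_erase] at hp
  by_cases hbt : b = t
  · exact hbt ▸ hpivot p hp.2 hp.1
  · exact hR.2.2 p hp.2 b (fun hbR => hb (Finset.mem_erase.2 ⟨hbt, hbR⟩)) hbu hbv

lemma not_segCross_of_spokes (hS : GeneralPosition S) (huv : u ≠ v)
    (hR : IsNoncrossingSplit u v R) {a b c d : {p : Pt // p ∈ S}}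
    (hab : (a = u ∧ b ∈ R) ∨ (a = v ∧ b ∉ R)) (hcd : (c = u ∧ d ∈ R) ∨ (c = v ∧ d ∉ R))
    (hba : a ≠ b) (hdc : c ≠ d) (hne : s(a, b) ≠ s(c, d)) : ¬ SegCross a.1 b.1 c.1 d.1 := by
  obtain ⟨hu, hv, hcross⟩ := hR
  have hspokes : ∀ {p b}, p ∈ R → b ∉ R → v ≠ b → ¬ SegCross u.1 p.1 v.1 b.1 := by
    intro p b hp hb hvb
    by_cases hbu : b = u
    · subst hbu
      rw [segCross_swap_right]
      exact not_segCross_of_det2_ne_zero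
        (hS.det2_ne_zero (ne_of_mem_of_not_mem hp hu).symm huv (ne_of_mem_of_not_mem hp hv))
    · exact hcross p hp b hb hbu hvb.symm
  rcases hab with ⟨rfl, hb⟩ | ⟨rfl, hb⟩ <;> rcases hcd with ⟨rfl, hd⟩ | ⟨rfl, hd⟩
  · exact not_segCross_of_det2_ne_zero (hS.det2_ne_zero hba hdc (fun h => hne (h ▸ rfl)))
  · exact hspokes hb hd hdc
  · rw [segCross_comm]; exact hspokes hd hb hba
  · exact not_segCross_of_det2_ne_zero (hS.det2_ne_zero hba hdc (fun h => hne (h ▸ rfl)))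

/-- Among the points of `R` on the side of line `uv` of some `t₀ ∈ R`, take `t` maximising the
angle `∠uvt`: the other points of `R` on that side are then on the side of `u` of line `vt`, and
those on the other side are separated from `vt` by line `uv`. -/
lemma exists_mem_forall_not_segCross (hS : GeneralPosition S) (huv : u ≠ v) (hu : u ∉ R)
    (hv : v ∉ R) (hR : R.Nonempty) : ∃ t ∈ R, ∀ p ∈ R, p ≠ t → ¬ SegCross u.1 p.1 v.1 t.1 := by
  obtain ⟨t₀, ht₀⟩ := hR
  have hside : ∀ p ∈ R, det2 v.1 u.1 p.1 ≠ 0 := fun p hp =>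
    hS.det2_ne_zero huv.symm (ne_of_mem_of_not_mem hp hv).symm (ne_of_mem_of_not_mem hp hu).symm
  set σ := det2 v.1 u.1 t₀.1
  obtain ⟨t, ht, htmin⟩ := (R.filter fun p => 0 < σ * det2 v.1 u.1 p.1).exists_min_image
    (fun p => dot2 v.1 u.1 p.1 / (σ * det2 v.1 u.1 p.1))
    ⟨t₀, Finset.mem_filter.2 ⟨ht₀, mul_self_pos.2 (hside t₀ ht₀)⟩⟩
  rw [Finset.mem_filter] at ht
  refine ⟨t, ht.1, fun p hp hpt => ?_⟩
  by_cases hpσ : 0 < σ * det2 v.1 u.1 p.1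
  · have hle := htmin p (Finset.mem_filter.2 ⟨hp, hpσ⟩)
    rw [div_le_div_iff₀ ht.2 hpσ] at hle
    have hid := dot2_mul_det2_sub_dot2_mul_det2 v.1 u.1 t.1 p.1
    have hvu := dot2_self_pos (Subtype.coe_ne_coe.2 huv)
    have htp : det2 v.1 t.1 p.1 ≠ 0 := hS.det2_ne_zero
      (ne_of_mem_of_not_mem ht.1 hv).symm (ne_of_mem_of_not_mem hp hv).symm hpt.symm
    have hσtp : σ * det2 v.1 t.1 p.1 < 0 := by
      have h : dot2 v.1 u.1 u.1 * (σ * det2 v.1 t.1 p.1) ≤ 0 := by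
        linear_combination hle - σ * hid
      refine lt_of_le_of_ne ?_ (mul_ne_zero (hside t₀ ht₀) htp)
      nlinarith
    have h := mul_neg_of_pos_of_neg ht.2 hσtp
    rw [segCross_comm]
    refine not_segCross_of_sameSide ?_
    rw [det2_swap_snd_thd]
    nlinarith [sq_nonneg σ]
  · have hpσ' : σ * det2 v.1 u.1 p.1 < 0 :=
      lt_of_le_of_ne (not_lt.1 hpσ) (mul_ne_zero (hside t₀ ht₀) (hside p hp))
    have h := mul_neg_of_pos_of_neg ht.2 hpσ'
    refine not_segCross_of_oppSide ?_
    rw [det2_swap_fst_snd v.1 u.1 p.1, det2_swap_fst_snd v.1 u.1 t.1]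
    nlinarith [sq_nonneg σ]

lemma noncross_doubleStar (hS : GeneralPosition S) (huv : u ≠ v) (hR : IsNoncrossingSplit u v R)
    (a b c d : {p : Pt // p ∈ S}) (hab : (doubleStar u v R).Adj a b)
    (hcd : (doubleStar u v R).Adj c d) (hne : s(a, b) ≠ s(c, d)) : ¬ SegCross a.1 b.1 c.1 d.1 := by
  obtain ⟨hab, hab' | hab'⟩ := hab <;> obtain ⟨hcd, hcd' | hcd'⟩ := hcd
  · exact not_segCross_of_spokes hS huv hR hab' hcd' hab hcd hne
  · rw [segCross_swap_right]
    exact not_segCross_of_spokes hS huv hR hab' hcd' hab hcd.symm (by rwa [Sym2.eq_swap (a := d)])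
  · rw [segCross_swap_left]
    exact not_segCross_of_spokes hS huv hR hab' hcd' hab.symm hcd (by rwa [Sym2.eq_swap (a := b)])
  · rw [segCross_swap_left, segCross_swap_right]
    exact not_segCross_of_spokes hS huv hR hab' hcd' hab.symm hcd.symm
      (by rwa [Sym2.eq_swap (a := b), Sym2.eq_swap (a := d)])

def planeDoubleStar (hS : GeneralPosition S) (huv : u ≠ v) (hR : IsNoncrossingSplit u v R) :
    PlaneCaterpillar S where
  graph := doubleStar u v R
  isTree := (isCaterpillar_doubleStar huv hR.1).1
  noncross := noncross_doubleStar hS huv hR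
  isCaterpillar := isCaterpillar_doubleStar huv hR.1

lemma PlaneCaterpillar.ext_graph {C₁ C₂ : PlaneCaterpillar S} (h : C₁.graph = C₂.graph) :
    C₁ = C₂ := by
  obtain ⟨⟨G₁, _, _⟩, _⟩ := C₁
  obtain ⟨⟨G₂, _, _⟩, _⟩ := C₂
  subst h
  rfl

lemma slide_planeDoubleStar_erase (hS : ConvexPosition S) (huv : u ≠ v)
    (hR : IsNoncrossingSplit u v R) {t : {p : Pt // p ∈ S}} (ht : t ∈ R)
    (hR' : IsNoncrossingSplit u v (R.erase t)) :
    Slide (planeDoubleStar hS.1 huv hR) (planeDoubleStar hS.1 huv hR') :=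
  Or.inl ⟨t, u, v, ⟨ne_of_mem_of_not_mem ht hR.1, Or.inr (Or.inl ⟨rfl, ht⟩)⟩,
    doubleStar_adj_centres huv hR.1, doubleStar_adj_centres huv hR'.1,
    hS.emptyTriangle t.2 u.2 v.2, edgeSet_doubleStar_erase hR.1 hR.2.1 ht⟩

lemma slideSeq_planeDoubleStar (hS : ConvexPosition S) (huv : u ≠ v)
    (hR : IsNoncrossingSplit u v R) :
    SlideSeq R.card (planeDoubleStar hS.1 huv hR)
      (planeDoubleStar hS.1 huv isNoncrossingSplit_empty) := by
  induction R using Finset.strongInduction with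
  | H R ih =>
    rcases R.eq_empty_or_nonempty with rfl | hne
    · exact SlideSeq.refl _
    obtain ⟨t, ht, hpivot⟩ := exists_mem_forall_not_segCross hS.1 huv hR.1 hR.2.1 hne
    have hR' := hR.erase hpivot
    rw [← Finset.card_erase_add_one ht]
    exact SlideSeq.cons (slide_planeDoubleStar_erase hS huv hR ht hR')
      (ih _ (Finset.erase_ssubset ht) hR')

end PlaneDoubleStar

theorem star_to_star_convex_general (S : Finset Pt)
    (hconv : ConvexPosition S)
    (u v : {p : Pt // p ∈ S}) (huv : u ≠ v)
    (Cu : PlaneCaterpillar S) (hCu : Cu.graph = starGraph S u) :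
    ∃ Cv : PlaneCaterpillar S, Cv.graph = starGraph S v ∧
      ∃ m ≤ S.card - 2, SlideSeq m Cu Cv := by
  have hR := isNoncrossingSplit_sdiff_pair (u := u) (v := v)
  obtain rfl : Cu = planeDoubleStar hconv.1 huv hR :=
    PlaneCaterpillar.ext_graph (hCu.trans doubleStar_sdiff_pair.symm)
  refine ⟨planeDoubleStar hconv.1 huv isNoncrossingSplit_empty, doubleStar_empty, _, ?_,
    slideSeq_planeDoubleStar hconv huv hR⟩
  rw [Finset.card_sdiff_of_subset (Finset.subset_univ _), Finset.card_univ, Fintype.card_coe,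
    Finset.card_pair huv]

/-- For `S` in convex position with `n ≥ 3` points and distinct `u, v ∈ S`,
the spanning star with center `u` can be transformed into the spanning star with center `v`
using at most `n - 2` slides. -/
theorem star_to_star_convex (S : Finset Pt)
    (hcard : 3 ≤ S.card) (hconv : ConvexPosition S)
    (u v : {p : Pt // p ∈ S}) (huv : u ≠ v)
    (Cu : PlaneCaterpillar S) (hCu : Cu.graph = starGraph S u) :
    ∃ Cv : PlaneCaterpillar S, Cv.graph = starGraph S v ∧
      ∃ m ≤ S.card - 2, SlideSeq m Cu Cv :=
  star_to_star_convex_general S hconv u v huv Cu hCu
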